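/- arXiv:0804.4870 — 7 statements merged into one kernel-verified Lean document; each statement's English description precedes it below -/
import Mathlib

section
/- Let D be a locally nilpotent ℂ-derivation of ℂ[X_1,…,X_n] that is homogeneous of nonzero degree k with respect to integer weights w = (w_1,…,w_n). Let F be the ℂ-algebra automorphism exp(D), i.e. the automorphism satisfying F(p) = Σ_{i=0}^{m−1} (1/i!)·D^i(p) for every polynomial p and every m with D^m(p) = 0, and let Λ be the linear automorphism determined by Λ(X_i) = e^{w_i}·X_i. Then Λ∘F is linearizable: there exists a ℂ-algebra automorphism G of ℂ[X_1,…,X_n] such that G^{−1}∘(Λ∘F)∘G = Λ. -/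
/-!
For a locally nilpotent derivation `D`, the maps `exp (c • D)` (`c ∈ ℂ`) form a one-parameter group
of algebra automorphisms. Since `D` raises weighted degrees by `k` and `Λ` multiplies a form of
degree `d` by `e^d`, we get `Λ ∘ D = e^k • D ∘ Λ`, hence `Λ ∘ exp (c • D) = exp (c e^k • D) ∘ Λ`.
As `e^k ≠ 1` we can pick `c` with `(1 + c) e^k = c`, and then `G = exp (c • D)` conjugates
`Λ ∘ F = Λ ∘ exp D` to `Λ`: `G⁻¹ Λ F G = exp (-c • D) exp ((1 + c) e^k • D) Λ = Λ`.
-/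

open Finset MvPolynomial Module.End
open scoped Nat

theorem Finset.sum_range_sum_antidiagonal_eq_sum_range_sum_range {M : Type*} [AddCommMonoid M]
    (g : ℕ → ℕ → M) {m : ℕ} (hg : ∀ i j, m ≤ i + j → g i j = 0) :
    ∑ n ∈ range m, ∑ ij ∈ antidiagonal n, g ij.1 ij.2 = ∑ i ∈ range m, ∑ j ∈ range m, g i j := by
  simp_rw [Nat.sum_antidiagonal_eq_sum_range_succ g, Nat.succ_eq_add_one, sum_range_diag_flip]
  refine sum_congr rfl fun i hi => sum_subset (range_subset_range.2 (m.sub_le i)) fun j _ hj => ?_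
  simp only [mem_range, not_lt] at hi hj
  exact hg i j (by omega)

theorem Nat.inv_factorial_smul_choose_smul {K V : Type*} [Field K] [CharZero K] [AddCommGroup V]
    [Module K V] {i j n : ℕ} (h : i + j = n) (v : V) :
    (n ! : K)⁻¹ • n.choose i • v = ((i ! : K)⁻¹ * (j ! : K)⁻¹) • v := by
  subst h
  rw [← Nat.cast_smul_eq_nsmul K, smul_smul, Nat.cast_add_choose, div_eq_mul_inv,
    inv_mul_cancel_left₀ (Nat.cast_ne_zero.2 (Nat.factorial_ne_zero _)), mul_inv]

namespace Derivation
variable {R A : Type*} [CommSemiring R] [CommSemiring A] [Algebra R A] (D : Derivation R A A)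

theorem pow_apply_mul (n : ℕ) (a b : A) :
    ((D : Module.End R A) ^ n) (a * b) = ∑ ij ∈ antidiagonal n,
      n.choose ij.1 • (((D : Module.End R A) ^ ij.1) a * ((D : Module.End R A) ^ ij.2) b) := by
  induction n with
  | zero => simp
  | succ n ih =>
    rw [sum_antidiagonal_choose_succ_nsmul
      (fun i j => ((D : Module.End R A) ^ i) a * ((D : Module.End R A) ^ j) b),
      pow_succ', Module.End.mul_apply, ih, map_sum, ← sum_add_distrib]
    refine sum_congr rfl fun ij hij => ?_
    rw [← Nat.choose_symm_of_eq_add (mem_antidiagonal.1 hij).symm, map_nsmul, ← smul_add,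
      pow_succ', pow_succ', Module.End.mul_apply, Module.End.mul_apply, coeFn_coe,
      leibniz, smul_eq_mul, smul_eq_mul, mul_comm (((D : Module.End R A) ^ ij.2) b)]

end Derivation

namespace Module.End

section CommSemiring
variable {R M : Type*} [CommSemiring R] [AddCommMonoid M] [Module R M] {f : Module.End R M}

def IsLocallyNilpotent (f : Module.End R M) : Prop := ∀ x, ∃ n, (f ^ n) x = 0

theorem pow_apply_eq_zero_of_le {x : M} {m n : ℕ} (hx : (f ^ m) x = 0) (hmn : m ≤ n) :
    (f ^ n) x = 0 := by
  rw [← Nat.sub_add_cancel hmn, pow_add, mul_apply, hx, map_zero]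

theorem IsLocallyNilpotent.smul (hf : f.IsLocallyNilpotent) (c : R) : (c • f).IsLocallyNilpotent :=
  fun x => (hf x).imp fun n hn => by rw [smul_pow, LinearMap.smul_apply, hn, smul_zero]

end CommSemiring

variable {K M N : Type*} [Field K] [AddCommGroup M] [Module K M] [AddCommGroup N] [Module K N]

-- The `finsum` is junk (`0`) unless `fⁱ x` vanishes for large `i`, as for locally nilpotent `f`.
noncomputable def locExp (f : Module.End K M) (x : M) : M := ∑ᶠ i : ℕ, (i ! : K)⁻¹ • (f ^ i) x

variable {f : Module.End K M} {x : M} {m : ℕ}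

theorem locExp_eq_sum (hx : (f ^ m) x = 0) :
    locExp f x = ∑ i ∈ range m, (i ! : K)⁻¹ • (f ^ i) x := by
  refine finsum_eq_sum_of_support_subset _ fun i hi => ?_
  by_contra hmi
  simp only [coe_range, Set.mem_Iio, not_lt] at hmi
  exact hi (by simp [pow_apply_eq_zero_of_le hx hmi])

theorem locExp_zero (x : M) : locExp (0 : Module.End K M) x = x := by
  simp [locExp_eq_sum (m := 1) (by simp : ((0 : Module.End K M) ^ 1) x = 0)]

theorem IsLocallyNilpotent.map_locExp (hf : f.IsLocallyNilpotent) (L : M →ₗ[K] N)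
    {g : Module.End K N} (hfg : g ∘ₗ L = L ∘ₗ f) (x : M) : L (locExp f x) = locExp g (L x) := by
  obtain ⟨m, hx⟩ := hf x
  have hpow (i : ℕ) : (g ^ i) (L x) = L ((f ^ i) x) :=
    LinearMap.congr_fun (commute_pow_left_of_commute hfg i) x
  rw [locExp_eq_sum hx, locExp_eq_sum (m := m) (by rw [hpow, hx, map_zero]), map_sum]
  simp only [map_smul, hpow]

noncomputable def IsLocallyNilpotent.exp (hf : f.IsLocallyNilpotent) : Module.End K M where
  toFun := locExp f
  map_add' x y := by
    obtain ⟨m, hm⟩ := hf x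
    obtain ⟨n, hn⟩ := hf y
    rw [locExp_eq_sum (pow_apply_eq_zero_of_le hm (le_max_left m n)),
      locExp_eq_sum (pow_apply_eq_zero_of_le hn (le_max_right m n)),
      locExp_eq_sum (m := max m n) (by rw [map_add, pow_apply_eq_zero_of_le hm (le_max_left m n),
        pow_apply_eq_zero_of_le hn (le_max_right m n), add_zero]), ← sum_add_distrib]
    simp only [map_add, smul_add]
  map_smul' c x := by
    obtain ⟨m, hm⟩ := hf x
    rw [locExp_eq_sum hm, locExp_eq_sum (m := m) (by rw [map_smul, hm, smul_zero]), smul_sum]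
    simp only [map_smul, smul_comm c, RingHom.id_apply]

theorem IsLocallyNilpotent.exp_apply (hf : f.IsLocallyNilpotent) (x : M) :
    hf.exp x = locExp f x := rfl

variable [CharZero K]

theorem IsLocallyNilpotent.locExp_smul_locExp_smul (hf : f.IsLocallyNilpotent) (a b : K) (x : M) :
    locExp (a • f) (locExp (b • f) x) = locExp ((a + b) • f) x := by
  obtain ⟨m, hm⟩ := hf x
  have hsmul (c : K) : ((c • f) ^ m) x = 0 := by rw [smul_pow, LinearMap.smul_apply, hm, smul_zero]
  have hinner : ((a • f) ^ m) (locExp (b • f) x) = 0 := by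
    have hcomm : (b • f) ∘ₗ ((a • f) ^ m) = ((a • f) ^ m) ∘ₗ (b • f) := by
      simpa only [mul_eq_comp] using ((((Commute.refl f).smul_left b).smul_right a).pow_right m).eq
    rw [(hf.smul b).map_locExp _ hcomm, hsmul a, ← (hf.smul b).exp_apply, map_zero]
  let g (i j : ℕ) : M := ((i ! : K)⁻¹ * (j ! : K)⁻¹) • (a ^ i * b ^ j) • (f ^ (i + j)) x
  have hg (i j : ℕ) (h : m ≤ i + j) : g i j = 0 := by simp [g, pow_apply_eq_zero_of_le hm h]
  rw [locExp_eq_sum hinner, locExp_eq_sum (hsmul (a + b))]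
  calc ∑ i ∈ range m, (i ! : K)⁻¹ • ((a • f) ^ i) (locExp (b • f) x)
      = ∑ i ∈ range m, ∑ j ∈ range m, g i j := by
        refine sum_congr rfl fun i _ => ?_
        rw [locExp_eq_sum (hsmul b), map_sum, smul_sum]
        refine sum_congr rfl fun j _ => ?_
        simp only [g, smul_pow, LinearMap.smul_apply, map_smul, pow_add, mul_apply, smul_smul]
        ring_nf
    _ = ∑ n ∈ range m, ∑ ij ∈ antidiagonal n, g ij.1 ij.2 :=
        (sum_range_sum_antidiagonal_eq_sum_range_sum_range g hg).symm
    _ = ∑ n ∈ range m, (n ! : K)⁻¹ • (((a + b) • f) ^ n) x := by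
        refine sum_congr rfl fun n _ => ?_
        rw [smul_pow, LinearMap.smul_apply, (Commute.all a b).add_pow', sum_smul, smul_sum]
        refine sum_congr rfl fun ij hij => ?_
        rw [smul_assoc, Nat.inv_factorial_smul_choose_smul (mem_antidiagonal.1 hij),
          ← mem_antidiagonal.1 hij]

end Module.End

namespace Derivation
variable {K A : Type*} [Field K] [CommRing A] [Algebra K A] (D : Derivation K A A)

theorem locExp_one : locExp (D : Module.End K A) 1 = 1 := by
  rw [locExp_eq_sum (m := 1) (by rw [pow_one, coeFn_coe, map_one_eq_zero])]
  simp

variable {D} [CharZero K]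

theorem locExp_mul (hD : IsLocallyNilpotent (D : Module.End K A)) (a b : A) :
    locExp (D : Module.End K A) (a * b)
      = locExp (D : Module.End K A) a * locExp (D : Module.End K A) b := by
  set f : Module.End K A := ↑D
  obtain ⟨m, ha⟩ := hD a
  obtain ⟨m', hb⟩ := hD b
  have hterm (i j : ℕ) (h : m + m' ≤ i + j) : (f ^ i) a * (f ^ j) b = 0 := by
    rcases le_or_gt m i with hi | hi
    · rw [pow_apply_eq_zero_of_le ha hi, zero_mul]
    · rw [pow_apply_eq_zero_of_le hb (by omega : m' ≤ j), mul_zero]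
  have hab : (f ^ (m + m')) (a * b) = 0 := by
    rw [pow_apply_mul]
    exact sum_eq_zero fun ij hij => by
      rw [hterm ij.1 ij.2 (mem_antidiagonal.1 hij).ge, smul_zero]
  let g (i j : ℕ) : A := ((i ! : K)⁻¹ • (f ^ i) a) * ((j ! : K)⁻¹ • (f ^ j) b)
  have hg (i j : ℕ) (h : m + m' ≤ i + j) : g i j = 0 := by
    simp only [g, smul_mul_smul_comm, hterm i j h, smul_zero]
  rw [locExp_eq_sum hab, locExp_eq_sum (pow_apply_eq_zero_of_le ha (m.le_add_right m')),
    locExp_eq_sum (pow_apply_eq_zero_of_le hb (m'.le_add_left m)), sum_mul_sum,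
    ← sum_range_sum_antidiagonal_eq_sum_range_sum_range g hg]
  refine sum_congr rfl fun n _ => ?_
  rw [pow_apply_mul, smul_sum]
  refine sum_congr rfl fun ij hij => ?_
  rw [Nat.inv_factorial_smul_choose_smul (mem_antidiagonal.1 hij), ← smul_mul_smul_comm]

noncomputable def expAlgHom (hD : IsLocallyNilpotent (D : Module.End K A)) (c : K) : A →ₐ[K] A :=
  AlgHom.ofLinearMap (hD.smul c).exp (locExp_one (c • D)) (locExp_mul (D := c • D) (hD.smul c))

theorem expAlgHom_apply (hD : IsLocallyNilpotent (D : Module.End K A)) (c : K) (a : A) :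
    expAlgHom hD c a = locExp (c • (D : Module.End K A)) a := rfl

noncomputable def expAlgEquiv (hD : IsLocallyNilpotent (D : Module.End K A)) (c : K) : A ≃ₐ[K] A :=
  AlgEquiv.ofAlgHom (expAlgHom hD c) (expAlgHom hD (-c))
    (AlgHom.ext fun a => by
      simp [expAlgHom_apply, hD.locExp_smul_locExp_smul, locExp_zero])
    (AlgHom.ext fun a => by
      simp [expAlgHom_apply, hD.locExp_smul_locExp_smul, locExp_zero])

theorem expAlgEquiv_apply (hD : IsLocallyNilpotent (D : Module.End K A)) (c : K) (a : A) :
    expAlgEquiv hD c a = locExp (c • (D : Module.End K A)) a := rfl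

theorem expAlgEquiv_symm_apply (hD : IsLocallyNilpotent (D : Module.End K A)) (c : K) (a : A) :
    (expAlgEquiv hD c).symm a = locExp ((-c) • (D : Module.End K A)) a := rfl

end Derivation

theorem AddChar.map_sum_eq_prod {ι M R : Type*} [AddCommMonoid M] [CommMonoid R] (ψ : AddChar M R)
    (s : Finset ι) (f : ι → M) : ψ (∑ i ∈ s, f i) = ∏ i ∈ s, ψ (f i) := by
  induction s using Finset.cons_induction with
  | empty => simp
  | cons i s hi ih => rw [sum_cons, prod_cons, AddChar.map_add_eq_mul, ih]

namespace MvPolynomial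
variable {σ R M : Type*} [CommSemiring R] [AddCommMonoid M] {w : σ → M} {ψ : AddChar M R}
  {Λ : MvPolynomial σ R →ₐ[R] MvPolynomial σ R}

theorem algHom_monomial_of_apply_X (hΛ : ∀ i, Λ (X i) = ψ (w i) • X i) (v : σ →₀ ℕ) (a : R) :
    Λ (monomial v a) = ψ (Finsupp.weight w v) • monomial v a := by
  have hΛ_eq : Λ = aeval fun i => ψ (w i) • X i := algHom_ext fun i => by rw [hΛ, aeval_X]
  rw [hΛ_eq, aeval_monomial, monomial_eq, Finsupp.weight_apply, Finsupp.sum, Finsupp.prod,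
    Finsupp.prod, AddChar.map_sum_eq_prod]
  simp only [smul_pow, prod_smul, AddChar.map_nsmul_eq_pow, algebraMap_eq, mul_smul_comm]

theorem IsWeightedHomogeneous.algHom_apply_of_apply_X (hΛ : ∀ i, Λ (X i) = ψ (w i) • X i)
    {p : MvPolynomial σ R} {d : M} (hp : IsWeightedHomogeneous w p d) : Λ p = ψ d • p := by
  rw [p.as_sum, map_sum, smul_sum]
  refine sum_congr rfl fun v hv => ?_
  rw [algHom_monomial_of_apply_X hΛ, hp (mem_support_iff.1 hv)]

theorem algHom_comp_eq_smul_comp_of_apply_X (hΛ : ∀ i, Λ (X i) = ψ (w i) • X i)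
    {L : MvPolynomial σ R →ₗ[R] MvPolynomial σ R} {k : M}
    (hL : ∀ d p, IsWeightedHomogeneous w p d → IsWeightedHomogeneous w (L p) (d + k)) :
    Λ.toLinearMap ∘ₗ L = ψ k • (L ∘ₗ Λ.toLinearMap) := by
  ext v : 2
  have hv := isWeightedHomogeneous_monomial w v (1 : R) rfl
  change Λ (L (monomial v 1)) = ψ k • L (Λ (monomial v 1))
  rw [IsWeightedHomogeneous.algHom_apply_of_apply_X hΛ (hL _ _ hv),
    IsWeightedHomogeneous.algHom_apply_of_apply_X hΛ hv, map_smul, smul_smul,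
    AddChar.map_add_eq_mul, mul_comm]

end MvPolynomial

/-- If `D` is a locally nilpotent derivation of `ℂ[X_1,…,X_n]` homogeneous of nonzero
degree `k` for integer weights `w`, `F = exp(D)` and `Λ(X_i) = e^{w_i} • X_i`, then `Λ ∘ F`
is linearizable: `G⁻¹ ∘ (Λ ∘ F) ∘ G = Λ` for some automorphism `G`. -/
theorem nagata_stmt_4 (n : ℕ) (w : Fin n → ℤ) (k : ℤ) (hk : k ≠ 0)
    (D : Derivation ℂ (MvPolynomial (Fin n) ℂ) (MvPolynomial (Fin n) ℂ))
    (hln : ∀ p : MvPolynomial (Fin n) ℂ, ∃ m : ℕ, (⇑D)^[m] p = 0)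
    (hD : ∀ (d : ℤ) (p : MvPolynomial (Fin n) ℂ),
      IsWeightedHomogeneous w p d →
      D p = 0 ∨ IsWeightedHomogeneous w (D p) (d + k))
    (F : MvPolynomial (Fin n) ℂ ≃ₐ[ℂ] MvPolynomial (Fin n) ℂ)
    (hF : ∀ (p : MvPolynomial (Fin n) ℂ) (m : ℕ), (⇑D)^[m] p = 0 →
      F p = ∑ i ∈ Finset.range m, ((Nat.factorial i : ℂ))⁻¹ • (⇑D)^[i] p)
    (Λ : MvPolynomial (Fin n) ℂ ≃ₐ[ℂ] MvPolynomial (Fin n) ℂ)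
    (hΛ : ∀ i, Λ (X i) = Complex.exp ((w i : ℂ)) • X i) :
    ∃ G : MvPolynomial (Fin n) ℂ ≃ₐ[ℂ] MvPolynomial (Fin n) ℂ,
      ∀ p, G.symm (Λ (F (G p))) = Λ p := by
  set f : Module.End ℂ (MvPolynomial (Fin n) ℂ) := ↑D
  have hf : f.IsLocallyNilpotent := fun p => (hln p).imp fun m hm => by rwa [pow_apply]
  have hF_eq (p) : F p = locExp ((1 : ℂ) • f) p := by
    obtain ⟨m, hm⟩ := hln p
    rw [hF p m hm, one_smul, locExp_eq_sum (m := m) (by rwa [pow_apply])]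
    simp only [f, pow_apply, Derivation.coeFn_coe]
  let ψ : AddChar ℤ ℂ :=
    ⟨fun d => Complex.exp d, by simp, fun a b => by push_cast; exact Complex.exp_add _ _⟩
  have hΛf : Λ.toLinearMap ∘ₗ f = ψ k • (f ∘ₗ Λ.toLinearMap) :=
    algHom_comp_eq_smul_comp_of_apply_X (Λ := Λ.toAlgHom) (ψ := ψ) hΛ fun d p hp =>
      (hD d p hp).elim (fun h => h ▸ isWeightedHomogeneous_zero ℂ w _) id
  have he : Complex.exp k ≠ 1 := by
    rw [← Complex.ofReal_intCast, ← Complex.ofReal_exp, Ne, Complex.ofReal_eq_one,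
      Real.exp_eq_one_iff, Int.cast_eq_zero]
    exact hk
  obtain ⟨c, hc⟩ : ∃ c : ℂ, -c + (1 + c) * Complex.exp k = 0 :=
    ⟨Complex.exp k / (1 - Complex.exp k), by field_simp [sub_ne_zero.2 he.symm]; ring⟩
  have hcomm :
      (((1 + c) * Complex.exp k) • f) ∘ₗ Λ.toLinearMap = Λ.toLinearMap ∘ₗ ((1 + c) • f) := by
    rw [LinearMap.smul_comp, LinearMap.comp_smul, hΛf, mul_smul]
    rfl
  refine ⟨Derivation.expAlgEquiv hf c, fun p => ?_⟩
  rw [Derivation.expAlgEquiv_apply, Derivation.expAlgEquiv_symm_apply, hF_eq,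
    hf.locExp_smul_locExp_smul, ← AlgEquiv.toLinearMap_apply, (hf.smul _).map_locExp _ hcomm,
    hf.locExp_smul_locExp_smul, hc, zero_smul, locExp_zero, AlgEquiv.toLinearMap_apply]
end

section
/- Let k be a field of characteristic ≠ 2. The Nagata derivation D = Δ·δ of k[X,Y,Z] is locally nilpotent: for every polynomial p ∈ k[X,Y,Z] there exists m ∈ ℕ such that D^m(p) = 0. -/
open MvPolynomial

section Aux

variable {k : Type*} [CommRing k] {A : Type*} [CommRing A] [Algebra k A]

lemma nagata_aux_iter_zero (D : Derivation k A A) (n : ℕ) : (⇑D)^[n] 0 = 0 := by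
  induction n with
  | zero => rfl
  | succ n ih => rw [Function.iterate_succ_apply, map_zero, ih]

lemma nagata_aux_iter_add (D : Derivation k A A) (n : ℕ) (a b : A) :
    (⇑D)^[n] (a + b) = (⇑D)^[n] a + (⇑D)^[n] b := by
  induction n generalizing a b with
  | zero => rfl
  | succ n ih =>
      rw [Function.iterate_succ_apply, map_add, ih, Function.iterate_succ_apply,
        Function.iterate_succ_apply]

lemma nagata_aux_stable (D : Derivation k A A) {m M : ℕ} (h : m ≤ M) {a : A}
    (ha : (⇑D)^[m] a = 0) : (⇑D)^[M] a = 0 := by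
  obtain ⟨d, rfl⟩ := Nat.exists_eq_add_of_le h
  rw [Nat.add_comm, Function.iterate_add_apply, ha, nagata_aux_iter_zero]

lemma nagata_aux_mul (D : Derivation k A A) :
    ∀ s m n (a b : A), m + n = s → (⇑D)^[m] a = 0 → (⇑D)^[n] b = 0 →
      (⇑D)^[s] (a * b) = 0 := by
  intro s
  induction s with
  | zero =>
      intro m n a b hs ha hb
      obtain ⟨rfl, rfl⟩ := Nat.add_eq_zero.mp hs
      simp only [Function.iterate_zero_apply] at ha hb ⊢
      rw [ha, zero_mul]
  | succ s ih =>
      intro m n a b hs ha hb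
      match m, n with
      | 0, n =>
          simp only [Function.iterate_zero_apply] at ha
          rw [ha, zero_mul, nagata_aux_iter_zero]
      | m + 1, 0 =>
          simp only [Function.iterate_zero_apply] at hb
          rw [hb, mul_zero, nagata_aux_iter_zero]
      | m + 1, n + 1 =>
          rw [Function.iterate_succ_apply, Derivation.leibniz, smul_eq_mul, smul_eq_mul,
            nagata_aux_iter_add]
          rw [ih (m + 1) n a (D b) (by omega) ha (by
              rw [← Function.iterate_succ_apply]; exact hb),
            ih (n + 1) m b (D a) (by omega) hb (by
              rw [← Function.iterate_succ_apply]; exact ha), add_zero]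

end Aux

/-- Over a field `k` of characteristic `≠ 2`, the Nagata derivation `D = Δ·δ` of `k[X,Y,Z]`
(determined by `D X = −2YΔ`, `D Y = ZΔ`, `D Z = 0` where `Δ = XZ + Y²`)
is locally nilpotent. -/
theorem nagata_stmt_5 (k : Type*) [Field k] (h2 : (2 : k) ≠ 0)
    (Δ : MvPolynomial (Fin 3) k) (hΔ : Δ = X 0 * X 2 + X 1 ^ 2)
    (D : Derivation k (MvPolynomial (Fin 3) k) (MvPolynomial (Fin 3) k))
    (hDX : D (X 0) = -(2 * X 1 * Δ))
    (hDY : D (X 1) = X 2 * Δ)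
    (hDZ : D (X 2) = 0) :
    ∀ p : MvPolynomial (Fin 3) k, ∃ m : ℕ, (⇑D)^[m] p = 0 := by
  have hC : ∀ a : k, D (C a) = 0 := by
    intro a
    rw [show (C a : MvPolynomial (Fin 3) k) = algebraMap k _ a from rfl]
    exact D.map_algebraMap a
  have hΔ0 : D Δ = 0 := by
    have h : Δ = X 0 * X 2 + X 1 * X 1 := by rw [hΔ]; ring
    rw [h, map_add, Derivation.leibniz, Derivation.leibniz, hDX, hDY, hDZ]
    simp only [smul_eq_mul]
    ring
  have step2 : D (-(2 * X 1 * Δ)) = -(2 * X 2 * Δ ^ 2) := by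
    have h : -(2 * X 1 * Δ) = -((X 1 + X 1) * Δ) := by ring
    rw [h, map_neg, Derivation.leibniz, map_add, hDY, hΔ0]
    simp only [smul_eq_mul]
    ring
  have step3 : D (-(2 * X 2 * Δ ^ 2)) = 0 := by
    have h : -(2 * X 2 * Δ ^ 2) = -((X 2 + X 2) * (Δ * Δ)) := by ring
    rw [h, map_neg, Derivation.leibniz, Derivation.leibniz, map_add, hDZ, hΔ0]
    simp only [smul_eq_mul]
    ring
  have hgen : ∀ i : Fin 3, ∃ m, (⇑D)^[m] (X i) = 0 := by
    intro i
    fin_cases i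
    · refine ⟨3, ?_⟩
      show D (D (D (X 0))) = 0
      rw [hDX, step2, step3]
    · refine ⟨2, ?_⟩
      show D (D (X 1)) = 0
      rw [hDY, Derivation.leibniz, hDZ, hΔ0, smul_zero, smul_zero, add_zero]
    · exact ⟨1, by show D (X 2) = 0; exact hDZ⟩
  intro p
  induction p using MvPolynomial.induction_on with
  | C a => exact ⟨1, by show D (C a) = 0; exact hC a⟩
  | add p q hp hq =>
      obtain ⟨m, hm⟩ := hp
      obtain ⟨n, hn⟩ := hq
      refine ⟨max m n, ?_⟩
      rw [nagata_aux_iter_add, nagata_aux_stable D (le_max_left m n) hm,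
        nagata_aux_stable D (le_max_right m n) hn, add_zero]
  | mul_X p i hp =>
      obtain ⟨m, hm⟩ := hp
      obtain ⟨n, hn⟩ := hgen i
      exact ⟨m + n, nagata_aux_mul D (m + n) m n p (X i) rfl hm hn⟩
end

section
/- Let k be a field of characteristic ≠ 2, let a, b, c ∈ k be nonzero with ac = b², and let D = Δ·δ be the Nagata derivation of k[X,Y,Z]. Then D∘L_{(a,b,c)} = L_{(a,b,c)}∘((bc)^{−1}·D) as k-linear maps of k[X,Y,Z]; equivalently, L_{(a,b,c)}^{−1}∘D∘L_{(a,b,c)} = (bc)^{−1}·D. -/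
open MvPolynomial

/-!
Conjugating a derivation by an algebra automorphism gives again a derivation, and a derivation
of `k[X,Y,Z]` is determined by its values on the variables. So it suffices to check
`bc · L⁻¹(D(L x)) = D x` for `x = X, Y, Z`. Since `ac = b²`, the diagonal automorphism scales
`Δ = XZ + Y²` by `b²`, and the identity for `X` reduces to `abc = b³`.
-/

namespace Derivation

variable {R A : Type*} [CommSemiring R] [CommRing A] [Algebra R A]

def conjAlgEquiv (L : A ≃ₐ[R] A) (D : Derivation R A A) : Derivation R A A :=
  D.liftOfRightInverse (f := L.symm) L.symm_apply_apply fun x hx => by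
    rw [(map_eq_zero_iff _ L.symm.injective).1 hx, map_zero, map_zero]

@[simp]
theorem conjAlgEquiv_apply (L : A ≃ₐ[R] A) (D : Derivation R A A) (x : A) :
    D.conjAlgEquiv L x = L.symm (D (L x)) :=
  rfl

end Derivation

section Nagata

variable {k : Type*} [Field k] {a b c : k} (habc : a * c = b ^ 2)
  {L : MvPolynomial (Fin 3) k ≃ₐ[k] MvPolynomial (Fin 3) k}
  (hLX : L (X 0) = a • X 0) (hLY : L (X 1) = b • X 1) (hLZ : L (X 2) = c • X 2)
include habc hLX hLY hLZ

theorem map_nagataDelta :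
    L (X 0 * X 2 + X 1 ^ 2) = b ^ 2 • (X 0 * X 2 + X 1 ^ 2) := by
  rw [map_add, map_mul, map_pow, hLX, hLY, hLZ, smul_mul_smul_comm, smul_pow, habc, smul_add]

variable {D : Derivation k (MvPolynomial (Fin 3) k) (MvPolynomial (Fin 3) k)}
  (hDX : D (X 0) = -(2 * X 1 * (X 0 * X 2 + X 1 ^ 2)))
  (hDY : D (X 1) = X 2 * (X 0 * X 2 + X 1 ^ 2))
  (hDZ : D (X 2) = 0)
include hDX hDY hDZ

theorem map_nagata_X (i : Fin 3) : L (D (X i)) = (b * c) • D (L (X i)) := by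
  have hΔ := map_nagataDelta habc hLX hLY hLZ
  fin_cases i
  · show L (D (X 0)) = (b * c) • D (L (X 0))
    rw [hLX, D.map_smul, hDX, map_neg, map_mul, map_mul, map_ofNat, hLY, hΔ]
    simp only [smul_mul_assoc, mul_smul_comm, smul_neg, smul_smul]
    congr 2
    linear_combination (-b) * habc
  · show L (D (X 1)) = (b * c) • D (L (X 1))
    rw [hLY, D.map_smul, hDY, map_mul, hLZ, hΔ]
    simp only [smul_mul_assoc, mul_smul_comm, smul_smul]
    congr 1
    ring
  · show L (D (X 2)) = (b * c) • D (L (X 2))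
    rw [hLZ, D.map_smul, hDZ, map_zero, smul_zero, smul_zero]

theorem smul_conjAlgEquiv_nagata : (b * c) • D.conjAlgEquiv L = D :=
  MvPolynomial.derivation_ext fun i => by
    rw [Derivation.smul_apply, Derivation.conjAlgEquiv_apply, ← map_smul,
      ← map_nagata_X habc hLX hLY hLZ hDX hDY hDZ i, L.symm_apply_apply]

end Nagata

theorem nagata_stmt_8_general (k : Type*) [Field k]
    (a b c : k) (hb : b ≠ 0) (hc : c ≠ 0) (habc : a * c = b ^ 2)
    (Δ : MvPolynomial (Fin 3) k) (hΔ : Δ = X 0 * X 2 + X 1 ^ 2)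
    (D : Derivation k (MvPolynomial (Fin 3) k) (MvPolynomial (Fin 3) k))
    (hDX : D (X 0) = -(2 * X 1 * Δ))
    (hDY : D (X 1) = X 2 * Δ)
    (hDZ : D (X 2) = 0)
    (L : MvPolynomial (Fin 3) k ≃ₐ[k] MvPolynomial (Fin 3) k)
    (hLX : L (X 0) = a • X 0) (hLY : L (X 1) = b • X 1) (hLZ : L (X 2) = c • X 2) :
    (∀ p : MvPolynomial (Fin 3) k, D (L p) = L ((b * c)⁻¹ • D p)) ∧
    (∀ p : MvPolynomial (Fin 3) k, L.symm (D (L p)) = (b * c)⁻¹ • D p) := by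
  subst hΔ
  have hconj p : L.symm (D (L p)) = (b * c)⁻¹ • D p :=
    calc L.symm (D (L p)) = (b * c)⁻¹ • ((b * c) • D.conjAlgEquiv L) p := by
          rw [Derivation.smul_apply, inv_smul_smul₀ (mul_ne_zero hb hc),
            Derivation.conjAlgEquiv_apply]
      _ = (b * c)⁻¹ • D p := by rw [smul_conjAlgEquiv_nagata habc hLX hLY hLZ hDX hDY hDZ]
  exact ⟨fun p => by rw [← hconj, L.apply_symm_apply], hconj⟩

/-- Over a field of characteristic `≠ 2`, for nonzero `a,b,c` with `ac = b²`, the Nagata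
derivation `D` satisfies `D ∘ L_{(a,b,c)} = L_{(a,b,c)} ∘ ((bc)⁻¹ • D)`, equivalently
`L⁻¹ ∘ D ∘ L = (bc)⁻¹ • D`. -/
theorem nagata_stmt_8 (k : Type*) [Field k] (h2 : (2 : k) ≠ 0)
    (a b c : k) (ha : a ≠ 0) (hb : b ≠ 0) (hc : c ≠ 0) (habc : a * c = b ^ 2)
    (Δ : MvPolynomial (Fin 3) k) (hΔ : Δ = X 0 * X 2 + X 1 ^ 2)
    (D : Derivation k (MvPolynomial (Fin 3) k) (MvPolynomial (Fin 3) k))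
    (hDX : D (X 0) = -(2 * X 1 * Δ))
    (hDY : D (X 1) = X 2 * Δ)
    (hDZ : D (X 2) = 0)
    (L : MvPolynomial (Fin 3) k ≃ₐ[k] MvPolynomial (Fin 3) k)
    (hLX : L (X 0) = a • X 0) (hLY : L (X 1) = b • X 1) (hLZ : L (X 2) = c • X 2) :
    (∀ p : MvPolynomial (Fin 3) k, D (L p) = L ((b * c)⁻¹ • D p)) ∧
    (∀ p : MvPolynomial (Fin 3) k, L.symm (D (L p)) = (b * c)⁻¹ • D p) :=
  nagata_stmt_8_general k a b c hb hc habc Δ hΔ D hDX hDY hDZ L hLX hLY hLZ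
end

section
/- Let k be a field of characteristic ≠ 2, let a, b, c ∈ k be nonzero with ac = b², and let λ ∈ k. Then N^λ∘L_{(a,b,c)} = L_{(a,b,c)}∘N^{(bc)^{−1}λ} as k-algebra endomorphisms of k[X,Y,Z]. -/
open MvPolynomial

/-! Since `ac = b²`, the diagonal map `L` scales `Δ = XZ + Y²` by `b²`. Hence `L ∘ N^μ` sends the
generators to the same combinations as `N^λ ∘ L`, with each coefficient rescaled by a monomial in
`a, b, c`, and the coefficients agree exactly when `μbc = λ`. -/

theorem map_mul_add_sq_eq_smul {k A F : Type*} [CommSemiring k] [CommSemiring A] [Algebra k A]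
    [FunLike F A A] [AlgHomClass F k A A] {φ : F} {a b c : k} {x y z : A}
    (hx : φ x = a • x) (hy : φ y = b • y) (hz : φ z = c • z) (habc : a * c = b ^ 2) :
    φ (x * z + y ^ 2) = b ^ 2 • (x * z + y ^ 2) := by
  rw [map_add, map_mul, map_pow, hx, hy, hz, smul_mul_smul_comm, smul_pow, habc, smul_add]

theorem nagata_stmt_9_general (k : Type*) [Field k]
    (a b c : k) (hb : b ≠ 0) (hc : c ≠ 0) (habc : a * c = b ^ 2)
    (lam : k)
    (Δ : MvPolynomial (Fin 3) k) (hΔ : Δ = X 0 * X 2 + X 1 ^ 2)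
    (Nmap : k → (MvPolynomial (Fin 3) k →ₐ[k] MvPolynomial (Fin 3) k))
    (hNX : ∀ l : k, Nmap l (X 0) = X 0 - (2 * l) • (X 1 * Δ) - (l ^ 2 / 2) • (X 2 * Δ ^ 2))
    (hNY : ∀ l : k, Nmap l (X 1) = X 1 + l • (X 2 * Δ))
    (hNZ : ∀ l : k, Nmap l (X 2) = X 2)
    (L : MvPolynomial (Fin 3) k ≃ₐ[k] MvPolynomial (Fin 3) k)
    (hLX : L (X 0) = a • X 0) (hLY : L (X 1) = b • X 1) (hLZ : L (X 2) = c • X 2) :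
    ∀ p : MvPolynomial (Fin 3) k, Nmap lam (L p) = L (Nmap ((b * c)⁻¹ * lam) p) := by
  have hμ : (b * c)⁻¹ * lam * (b * c) = lam := by
    rw [mul_comm, mul_inv_cancel_left₀ (mul_ne_zero hb hc)]
  generalize (b * c)⁻¹ * lam = μ at hμ ⊢
  have hLΔ : L Δ = b ^ 2 • Δ := hΔ ▸ map_mul_add_sq_eq_smul hLX hLY hLZ habc
  suffices (Nmap lam).comp (L : _ →ₐ[k] _) = (L : _ →ₐ[k] _).comp (Nmap μ) from
    fun p => DFunLike.congr_fun this p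
  refine algHom_ext fun i => ?_
  fin_cases i <;>
    simp only [AlgHom.comp_apply, AlgEquiv.coe_toAlgHom, Fin.zero_eta, Fin.mk_one,
      Fin.reduceFinMk, hNX, hNY, hNZ, hLX, hLY, hLZ, map_sub, map_add, map_smul, map_mul, map_pow,
      hLΔ, smul_pow, smul_mul_smul_comm, smul_smul]
  · match_scalars
    · ring
    · linear_combination 2 * a * hμ - 2 * μ * b * habc
    · linear_combination a * (lam + μ * b * c) / 2 * hμ - μ ^ 2 * b ^ 2 * c / 2 * habc
  · match_scalars
    · ring
    · linear_combination -b * hμ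

/-- Over a field of characteristic `≠ 2`, for nonzero `a,b,c` with `ac = b²` and any `λ`,
one has `N^λ ∘ L_{(a,b,c)} = L_{(a,b,c)} ∘ N^{(bc)⁻¹λ}`. -/
theorem nagata_stmt_9 (k : Type*) [Field k] (h2 : (2 : k) ≠ 0)
    (a b c : k) (ha : a ≠ 0) (hb : b ≠ 0) (hc : c ≠ 0) (habc : a * c = b ^ 2)
    (lam : k)
    (Δ : MvPolynomial (Fin 3) k) (hΔ : Δ = X 0 * X 2 + X 1 ^ 2)
    (Nmap : k → (MvPolynomial (Fin 3) k →ₐ[k] MvPolynomial (Fin 3) k))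
    (hNX : ∀ l : k, Nmap l (X 0) = X 0 - (2 * l) • (X 1 * Δ) - (l ^ 2 / 2) • (X 2 * Δ ^ 2))
    (hNY : ∀ l : k, Nmap l (X 1) = X 1 + l • (X 2 * Δ))
    (hNZ : ∀ l : k, Nmap l (X 2) = X 2)
    (L : MvPolynomial (Fin 3) k ≃ₐ[k] MvPolynomial (Fin 3) k)
    (hLX : L (X 0) = a • X 0) (hLY : L (X 1) = b • X 1) (hLZ : L (X 2) = c • X 2) :
    ∀ p : MvPolynomial (Fin 3) k, Nmap lam (L p) = L (Nmap ((b * c)⁻¹ * lam) p) :=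
  nagata_stmt_9_general k a b c hb hc habc lam Δ hΔ Nmap hNX hNY hNZ L hLX hLY hLZ
end

section
/- Let E₁ := X∂_X − Z∂_Z and E₂ := Y∂_Y + 2Z∂_Z be the ℂ-derivations of ℂ[X,Y,Z] determined by E₁(X)=X, E₁(Y)=0, E₁(Z)=−Z and E₂(X)=0, E₂(Y)=Y, E₂(Z)=2Z, and let D = Δ·δ be the Nagata derivation. Then for all s, t ∈ ℂ the Lie bracket satisfies [sE₁ + tE₂, D] = (3t − s)·D. In particular, sE₁ + tE₂ commutes with D if and only if s = 3t. -/
open MvPolynomial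

/-- Let `E₁ = X∂_X − Z∂_Z`, `E₂ = Y∂_Y + 2Z∂_Z` and let `D` be the Nagata derivation of
`ℂ[X,Y,Z]`. Then `[sE₁ + tE₂, D] = (3t − s) • D`, and `sE₁ + tE₂` commutes with `D`
if and only if `s = 3t`. -/
theorem nagata_stmt_12
    (Δ : MvPolynomial (Fin 3) ℂ) (hΔ : Δ = X 0 * X 2 + X 1 ^ 2)
    (D E₁ E₂ : Derivation ℂ (MvPolynomial (Fin 3) ℂ) (MvPolynomial (Fin 3) ℂ))
    (hDX : D (X 0) = -(2 * X 1 * Δ)) (hDY : D (X 1) = X 2 * Δ) (hDZ : D (X 2) = 0)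
    (hE1X : E₁ (X 0) = X 0) (hE1Y : E₁ (X 1) = 0) (hE1Z : E₁ (X 2) = -X 2)
    (hE2X : E₂ (X 0) = 0) (hE2Y : E₂ (X 1) = X 1) (hE2Z : E₂ (X 2) = 2 * X 2) :
    ∀ s t : ℂ,
      (∀ p, (s • E₁ + t • E₂) (D p) - D ((s • E₁ + t • E₂) p) = (3 * t - s) • D p) ∧
      ((∀ p, (s • E₁ + t • E₂) (D p) = D ((s • E₁ + t • E₂) p)) ↔ s = 3 * t) := by
  intro s t
  set E : Derivation ℂ (MvPolynomial (Fin 3) ℂ) (MvPolynomial (Fin 3) ℂ) := s • E₁ + t • E₂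
    with hE
  have hEX : E (X 0) = C s * X 0 := by
    simp [hE, hE1X, hE2X, smul_eq_C_mul]
  have hEY : E (X 1) = C t * X 1 := by
    simp [hE, hE1Y, hE2Y, smul_eq_C_mul]
  have hEZ : E (X 2) = C (2 * t - s) * X 2 := by
    simp only [hE, Derivation.add_apply, Derivation.smul_apply, hE1Z, hE2Z, smul_eq_C_mul,
      map_sub, map_mul, map_ofNat]
    ring
  have hEΔ : E Δ = C (2 * t) * Δ := by
    rw [hΔ, map_add, Derivation.leibniz, Derivation.leibniz_pow, hEX, hEY, hEZ]
    simp only [smul_eq_mul, smul_eq_C_mul, map_sub, map_mul, map_ofNat, nsmul_eq_mul,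
      Nat.cast_ofNat]
    ring
  have h2Δ : E (2 * X 1 * Δ) = C (3 * t) * (2 * X 1 * Δ) := by
    have : (2 : MvPolynomial (Fin 3) ℂ) * X 1 * Δ = (2 : ℂ) • (X 1 * Δ) := by
      simp [smul_eq_C_mul, map_ofNat]; ring
    rw [this, Derivation.map_smul, Derivation.leibniz, hEY, hEΔ]
    simp only [smul_eq_mul, smul_eq_C_mul, map_mul, map_ofNat]
    ring
  have hC0 : ⁅E, D⁆ (X 0) = (3 * t - s) • D (X 0) := by
    simp only [Derivation.commutator_apply, hDX, map_neg, h2Δ, hEX, C_mul',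
      Derivation.map_smul, hDX]
    simp only [smul_eq_mul, smul_eq_C_mul, map_sub, map_mul, map_ofNat]
    ring
  have hC1 : ⁅E, D⁆ (X 1) = (3 * t - s) • D (X 1) := by
    simp only [Derivation.commutator_apply, hDY, hEY, Derivation.leibniz, hEZ, hEΔ, C_mul',
      Derivation.map_smul, hDY]
    simp only [smul_eq_mul, smul_eq_C_mul, map_sub, map_mul, map_ofNat]
    ring
  have hC2 : ⁅E, D⁆ (X 2) = (3 * t - s) • D (X 2) := by
    simp only [Derivation.commutator_apply, hDZ, hEZ, map_zero, C_mul',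
      Derivation.map_smul, hDZ]
    simp
  have key : ⁅E, D⁆ = (3 * t - s) • D := by
    apply derivation_ext
    intro i
    fin_cases i
    · exact hC0
    · exact hC1
    · exact hC2
  have keyp : ∀ p, E (D p) - D (E p) = (3 * t - s) • D p := by
    intro p
    have := congrArg (fun F : Derivation ℂ (MvPolynomial (Fin 3) ℂ) (MvPolynomial (Fin 3) ℂ)
      => F p) key
    simpa [Derivation.commutator_apply] using this
  refine ⟨keyp, ?_, ?_⟩
  · intro h
    have h1 := keyp (X 1)
    rw [h (X 1), sub_self, hDY] at h1
    have hne : (X 2 * Δ : MvPolynomial (Fin 3) ℂ) ≠ 0 := by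
      intro h0
      have := congrArg (eval fun _ => (1 : ℂ)) h0
      simp [hΔ] at this
    have := (smul_eq_zero.mp h1.symm).resolve_right hne
    linear_combination -this
  · intro h p
    have h1 := keyp p
    rw [h] at h1
    rw [show (3 : ℂ) * t - 3 * t = 0 by ring, zero_smul] at h1
    exact sub_eq_zero.mp h1
end

section
/- Let k be a field of characteristic ≠ 2, let n ≥ 1, and let f ∈ k[X_2,…,X_n] (a polynomial not involving X_1). For g ∈ k[X_2,…,X_n] let E_g be the k-algebra automorphism of k[X_1,…,X_n] with E_g(X_1) = X_1 + g and E_g(X_j) = X_j for j ≥ 2, and let L be the linear automorphism with L(X_1) = 2X_1 and L(X_j) = X_j for j ≥ 2. Then E_{−2f} = E_{2f}^{−1} and E_f = (E_{2f}∘L∘E_{−2f})∘L^{−1}; in particular the elementary automorphism E_f is a product of two linearizable automorphisms, namely the conjugate E_{2f}∘L∘E_{2f}^{−1} of L and the linear map L^{−1}. -/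
/-!
Both identities are equalities of `k`-algebra endomorphisms of a polynomial ring, so it suffices
to compare them on the variables. Every map in sight fixes the variables other than `X i₁`, hence fixes `f`,
and on `X i₁` the identities become `(X + 2f) - 2f = X` and `2(X + f) = 2(X + 2f) - 2f`.
The second one is checked in the form `E_f ∘ L = E_{2f} ∘ L ∘ E_{-2f}`, which avoids `L⁻¹`.
-/

open MvPolynomial

namespace MvPolynomial

variable {R σ : Type*} [CommSemiring R]

theorem algHom_ext_of_ne {A : Type*} [CommSemiring A] [Algebra R A]
    {φ ψ : MvPolynomial σ R →ₐ[R] A} (i : σ) (hi : φ (X i) = ψ (X i))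
    (hne : ∀ j, j ≠ i → φ (X j) = ψ (X j)) : φ = ψ :=
  algHom_ext fun j => by
    by_cases hj : j = i
    · exact hj ▸ hi
    · exact hne j hj

theorem algHom_apply_eq_self_of_mem_supported {s : Set σ}
    (φ : MvPolynomial σ R →ₐ[R] MvPolynomial σ R) (hφ : ∀ j ∈ s, φ (X j) = X j)
    {p : MvPolynomial σ R} (hp : p ∈ supported R s) : φ p = p :=
  AlgHom.adjoin_le_equalizer φ (AlgHom.id R _) (by rintro _ ⟨j, hj, rfl⟩; exact hφ j hj) hp

end MvPolynomial

theorem nagata_stmt_16_general (k : Type*) [Field k]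
    (n : ℕ) (i₁ : Fin n)
    (f : MvPolynomial (Fin n) k)
    (hf : f ∈ MvPolynomial.supported k {j : Fin n | j ≠ i₁})
    (Ef E2f Em2f : MvPolynomial (Fin n) k ≃ₐ[k] MvPolynomial (Fin n) k)
    (hEf1 : Ef (X i₁) = X i₁ + f) (hEf2 : ∀ j, j ≠ i₁ → Ef (X j) = X j)
    (hE2f1 : E2f (X i₁) = X i₁ + 2 * f) (hE2f2 : ∀ j, j ≠ i₁ → E2f (X j) = X j)
    (hEm2f1 : Em2f (X i₁) = X i₁ - 2 * f) (hEm2f2 : ∀ j, j ≠ i₁ → Em2f (X j) = X j)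
    (L : MvPolynomial (Fin n) k ≃ₐ[k] MvPolynomial (Fin n) k)
    (hL1 : L (X i₁) = 2 * X i₁) (hL2 : ∀ j, j ≠ i₁ → L (X j) = X j) :
    Em2f = E2f.symm ∧
    ∀ p : MvPolynomial (Fin n) k, Ef p = E2f (L (Em2f (L.symm p))) := by
  have hE2ff : E2f f = f := algHom_apply_eq_self_of_mem_supported E2f.toAlgHom hE2f2 hf
  have hLf : L f = f := algHom_apply_eq_self_of_mem_supported L.toAlgHom hL2 hf
  have inverse : E2f.toAlgHom.comp Em2f.toAlgHom = AlgHom.id k _ :=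
    algHom_ext_of_ne i₁ (by simp [hEm2f1, hE2f1, hE2ff, map_ofNat])
      (fun j hj => by simp [hEm2f2 j hj, hE2f2 j hj])
  have conjugate : Ef.toAlgHom.comp L.toAlgHom =
      E2f.toAlgHom.comp (L.toAlgHom.comp Em2f.toAlgHom) :=
    algHom_ext_of_ne i₁
      (by simp only [AlgHom.coe_comp, AlgEquiv.coe_toAlgHom, Function.comp_apply, hL1, hEf1,
            hEm2f1, hE2f1, hLf, hE2ff, map_mul, map_sub, map_ofNat]
          ring)
      (fun j hj => by simp [hL2 j hj, hEf2 j hj, hEm2f2 j hj, hE2f2 j hj])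
  refine ⟨AlgEquiv.ext fun p => E2f.eq_symm_apply.mpr (AlgHom.congr_fun inverse p), fun p => ?_⟩
  calc Ef p = Ef (L (L.symm p)) := by rw [L.apply_symm_apply]
    _ = E2f (L (Em2f (L.symm p))) := AlgHom.congr_fun conjugate (L.symm p)

/-- Over a field of characteristic `≠ 2`, for `f ∈ k[X_2,…,X_n]` (not involving the first
variable), with `E_g` the elementary automorphism `X_1 ↦ X_1 + g` and `L` the linear
automorphism `X_1 ↦ 2X_1`, one has `E_{−2f} = E_{2f}⁻¹` and `E_f = (E_{2f}∘L∘E_{−2f})∘L⁻¹`;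
in particular the elementary automorphism `E_f` is a product of two linearizable
automorphisms. -/
theorem nagata_stmt_16 (k : Type*) [Field k] (h2 : (2 : k) ≠ 0)
    (n : ℕ) (hn : 1 ≤ n) (i₁ : Fin n) (hi₁ : i₁ = ⟨0, hn⟩)
    (f : MvPolynomial (Fin n) k)
    (hf : f ∈ MvPolynomial.supported k {j : Fin n | j ≠ i₁})
    (Ef E2f Em2f : MvPolynomial (Fin n) k ≃ₐ[k] MvPolynomial (Fin n) k)
    (hEf1 : Ef (X i₁) = X i₁ + f) (hEf2 : ∀ j, j ≠ i₁ → Ef (X j) = X j)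
    (hE2f1 : E2f (X i₁) = X i₁ + 2 * f) (hE2f2 : ∀ j, j ≠ i₁ → E2f (X j) = X j)
    (hEm2f1 : Em2f (X i₁) = X i₁ - 2 * f) (hEm2f2 : ∀ j, j ≠ i₁ → Em2f (X j) = X j)
    (L : MvPolynomial (Fin n) k ≃ₐ[k] MvPolynomial (Fin n) k)
    (hL1 : L (X i₁) = 2 * X i₁) (hL2 : ∀ j, j ≠ i₁ → L (X j) = X j) :
    Em2f = E2f.symm ∧
    ∀ p : MvPolynomial (Fin n) k, Ef p = E2f (L (Em2f (L.symm p))) :=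
  nagata_stmt_16_general k n i₁ f hf Ef E2f Em2f hEf1 hEf2 hE2f1 hE2f2 hEm2f1 hEm2f2 L hL1 hL2
end

section
/- Let k be a field and n ≥ 1. If F is a locally finite k-algebra automorphism of k[X_1,…,X_n] and σ is any k-algebra automorphism of k[X_1,…,X_n], then the conjugate σ^{−1}∘F∘σ is locally finite. Hence the set GLF_n(k) of products of locally finite automorphisms is a normal subgroup of the automorphism group GA_n(k). -/
open MvPolynomial

/-- The degree of a polynomial automorphism `F` of `k[X_1,…,X_n]`: the maximum of the total
degrees of the images of the variables. -/
noncomputable def autDeg (k : Type*) [Field k] (n : ℕ)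
    (F : MvPolynomial (Fin n) k ≃ₐ[k] MvPolynomial (Fin n) k) : ℕ :=
  Finset.univ.sup fun i => (F (X i)).totalDegree

/-- An automorphism `F` is locally finite if the sequence of degrees of its iterates is
bounded. -/
def IsLocallyFiniteAut (k : Type*) [Field k] (n : ℕ)
    (F : MvPolynomial (Fin n) k ≃ₐ[k] MvPolynomial (Fin n) k) : Prop :=
  ∃ C : ℕ, ∀ m : ℕ, autDeg k n (F ^ m) ≤ C

/-- `GLF_n(k)`: the subgroup of `GA_n(k)` generated by the locally finite automorphisms. -/
noncomputable def GLF (k : Type*) [Field k] (n : ℕ) :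
    Subgroup (MvPolynomial (Fin n) k ≃ₐ[k] MvPolynomial (Fin n) k) :=
  Subgroup.closure {F | IsLocallyFiniteAut k n F}

/-- Degree of the image of a polynomial under an algebra endomorphism. -/
lemma deg_apply_le {k : Type*} [Field k] {n : ℕ}
    (φ : MvPolynomial (Fin n) k →ₐ[k] MvPolynomial (Fin n) k) (d : ℕ)
    (hd : ∀ i, (φ (X i)).totalDegree ≤ d) (p : MvPolynomial (Fin n) k) :
    (φ p).totalDegree ≤ p.totalDegree * d := by
  conv_lhs => rw [p.as_sum, map_sum]
  refine (totalDegree_finset_sum _ _).trans (Finset.sup_le fun s hs => ?_)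
  rw [monomial_eq, map_mul, Finsupp.prod, map_prod]
  refine (totalDegree_mul _ _).trans ?_
  have h1 : (φ (C (coeff s p))).totalDegree = 0 := by
    rw [algHom_C]; exact totalDegree_C _
  rw [h1, zero_add]
  refine (totalDegree_finset_prod _ _).trans ?_
  calc ∑ i ∈ s.support, (φ (X i ^ s i)).totalDegree
      ≤ ∑ i ∈ s.support, s i * d := by
        refine Finset.sum_le_sum fun i _ => ?_
        rw [map_pow]
        exact (totalDegree_pow _ _).trans (Nat.mul_le_mul_left _ (hd i))
    _ = (∑ i ∈ s.support, s i) * d := by rw [Finset.sum_mul]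
    _ ≤ p.totalDegree * d := Nat.mul_le_mul_right _ (le_totalDegree hs)

lemma autDeg_mul_le {k : Type*} [Field k] {n : ℕ}
    (G H : MvPolynomial (Fin n) k ≃ₐ[k] MvPolynomial (Fin n) k) :
    autDeg k n (G * H) ≤ autDeg k n H * autDeg k n G := by
  refine Finset.sup_le fun i _ => ?_
  have : (G * H) (X i) = G (H (X i)) := rfl
  rw [this]
  have h := deg_apply_le (G : MvPolynomial (Fin n) k →ₐ[k] MvPolynomial (Fin n) k)
    (autDeg k n G)
    (fun j => Finset.le_sup (f := fun i => (G (X i)).totalDegree) (Finset.mem_univ j)) (H (X i))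
  refine h.trans (Nat.mul_le_mul_right _ ?_)
  exact Finset.le_sup (f := fun j => (H (X j)).totalDegree) (Finset.mem_univ i)

/-- A conjugate `σ⁻¹ ∘ F ∘ σ` of a locally finite automorphism `F` is locally finite; hence
the subgroup `GLF_n(k)` generated by the locally finite automorphisms is a normal subgroup
of `GA_n(k)`. -/
theorem nagata_stmt_19 (k : Type*) [Field k] (n : ℕ) (hn : 1 ≤ n) :
    (∀ F σ : MvPolynomial (Fin n) k ≃ₐ[k] MvPolynomial (Fin n) k,
      IsLocallyFiniteAut k n F → IsLocallyFiniteAut k n ((σ.trans F).trans σ.symm)) ∧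
    (GLF k n).Normal := by
  have key : ∀ F σ : MvPolynomial (Fin n) k ≃ₐ[k] MvPolynomial (Fin n) k,
      IsLocallyFiniteAut k n F → IsLocallyFiniteAut k n ((σ.trans F).trans σ.symm) := by
    intro F σ ⟨C, hC⟩
    have heq : (σ.trans F).trans σ.symm = σ⁻¹ * F * σ := rfl
    refine ⟨autDeg k n σ * C * autDeg k n σ⁻¹, fun m => ?_⟩
    have hpow : ((σ.trans F).trans σ.symm) ^ m = σ⁻¹ * F ^ m * σ := by
      rw [heq, show σ⁻¹ * F * σ = σ⁻¹ * F * (σ⁻¹)⁻¹ by rw [inv_inv],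
        conj_pow, inv_inv]
    rw [hpow]
    calc autDeg k n (σ⁻¹ * F ^ m * σ)
        ≤ autDeg k n σ * autDeg k n (σ⁻¹ * F ^ m) := autDeg_mul_le _ _
      _ ≤ autDeg k n σ * (autDeg k n (F ^ m) * autDeg k n σ⁻¹) :=
          Nat.mul_le_mul_left _ (autDeg_mul_le _ _)
      _ ≤ autDeg k n σ * (C * autDeg k n σ⁻¹) :=
          Nat.mul_le_mul_left _ (Nat.mul_le_mul_right _ (hC m))
      _ = autDeg k n σ * C * autDeg k n σ⁻¹ := by ring
  refine ⟨key, ⟨fun x hx g => ?_⟩⟩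
  induction hx using Subgroup.closure_induction with
  | mem y hy =>
      have : IsLocallyFiniteAut k n ((g⁻¹.trans y).trans g⁻¹.symm) := key y g⁻¹ hy
      have heq : (g⁻¹.trans y).trans g⁻¹.symm = (g⁻¹)⁻¹ * y * g⁻¹ := rfl
      rw [heq, inv_inv] at this
      exact Subgroup.subset_closure this
  | one => simpa using (GLF k n).one_mem
  | mul a b ha hb iha ihb =>
      have : g * (a * b) * g⁻¹ = (g * a * g⁻¹) * (g * b * g⁻¹) := by group
      rw [this]; exact mul_mem iha ihb
  | inv a ha iha =>
      have : g * a⁻¹ * g⁻¹ = (g * a * g⁻¹)⁻¹ := by group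
      rw [this]; exact inv_mem iha
end
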